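/- Let L > 0, γ₀ = √(2/L), λₙ = nπ/L, and αₙ = 2γ₀ if n is odd, αₙ = 0 if n is even. Let T > 0, let g and β be continuous on [0,T], and let zₙ : [0,T] → ℝ be continuous functions with |zₙ(t)| ≤ C for all n and all t ∈ [0,T]. For each n define θₙ(t) = (γ₀/λₙ)·∫₀ᵗ g(s) ds − (γ₀/λₙ)·∫₀ᵗ g(t−s)·(zₙ(s) + ∫₀ˢ β(s−r)zₙ(r) dr) ds, and define H(t) = ∑_{n=1}^∞ (αₙ/λₙ²)·zₙ(t) (the series converges uniformly on [0,T]). Then for every t ∈ [0,T] the series ∑_{n=1}^∞ (αₙ/λₙ)·θₙ(t) converges and equals γ₀·[ (∫₀ᵗ g(s) ds)·∑_{n=1}^∞ αₙ/λₙ² − ∫₀ᵗ g(t−s)H(s) ds − ∫₀ᵗ β(s)·(∫₀^{t−s} g(t−s−r)H(r) dr) ds ]. -/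

import Mathlib

/-!
Write `f ⋆ g` for the Laplace convolution `x ↦ ∫₀ˣ f(x - s) g(s) ds` and `cₙ = αₙ/λₙ²`.
Then `(αₙ/λₙ) θₙ(t) = γ₀ (cₙ ∫₀ᵗ g - (g ⋆ cₙzₙ)(t) - ((g ⋆ β) ⋆ cₙzₙ)(t))`, using associativity of
`⋆` (Fubini on the triangle `0 ≤ r ≤ s ≤ t`). Since `|cₙzₙ| ≤ C |cₙ|` and `∑ cₙ` converges, the
series may be summed under each convolution (dominated convergence), giving `g ⋆ H` and
`(g ⋆ β) ⋆ H = β ⋆ (g ⋆ H)`, which is the last integral of the identity.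
The data are only continuous on `[0, T]`, but `(f ⋆ g)(x)` depends only on `f, g` on `[0, x]`,
so the continuous case applies after extending the data continuously from `[0, T]`.
-/

open Real MeasureTheory Set Function intervalIntegral
open scoped Interval

theorem ContinuousOn.exists_continuous_eqOn_Icc {α β : Type*} [LinearOrder α] [TopologicalSpace α]
    [OrderTopology α] [TopologicalSpace β] {f : α → β} {a b : α}
    (hf : ContinuousOn f (Icc a b)) : ∃ F : α → β, Continuous F ∧ EqOn F f (Icc a b) := by
  rcases le_or_gt a b with hab | hab
  · exact ⟨IccExtend hab ((Icc a b).domRestrict f), continuous_IccExtend_iff.2 hf.domRestrict,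
      fun x hx => IccExtend_of_mem hab _ hx⟩
  · exact ⟨fun _ => f a, continuous_const, by simp [Icc_eq_empty_of_lt hab]⟩

theorem summable_div_sq_nat_mul_pi_div {a : ℕ → ℝ} {M : ℝ} (L : ℝ) (ha : ∀ n, |a n| ≤ M) :
    Summable fun n : ℕ => a n / ((n + 1 : ℕ) * π / L) ^ 2 := by
  have hsq : Summable fun n : ℕ => 1 / ((n + 1 : ℕ) : ℝ) ^ 2 :=
    (summable_nat_add_iff 1).mpr (Real.summable_one_div_nat_pow.mpr one_lt_two)
  refine (hsq.mul_left (M * (L / π) ^ 2)).of_norm_bounded fun n => ?_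
  have hdiv : a n / ((n + 1 : ℕ) * π / L) ^ 2
      = a n * ((L / π) ^ 2 * (1 / ((n + 1 : ℕ) : ℝ) ^ 2)) := by
    rw [div_pow, div_div_eq_mul_div]
    ring
  rw [hdiv, norm_mul, Real.norm_eq_abs, Real.norm_of_nonneg (by positivity), ← mul_assoc]
  gcongr
  exact ha n

theorem integral_integral_triangle_swap {t : ℝ} (ht : 0 ≤ t) {φ : ℝ → ℝ → ℝ}
    (hφ : Continuous (uncurry φ)) :
    ∫ s in (0:ℝ)..t, ∫ r in (0:ℝ)..s, φ s r = ∫ r in (0:ℝ)..t, ∫ s in r..t, φ s r := by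
  set μ := volume.restrict (Ioc (0:ℝ) t)
  set Ψ : ℝ × ℝ → ℝ := {p | p.2 ≤ p.1}.indicator (uncurry φ)
  have hΨ : Integrable Ψ (μ.prod μ) := by
    rw [Measure.prod_restrict, ← Measure.volume_eq_prod]
    refine IntegrableOn.indicator ?_ (measurableSet_le measurable_snd measurable_fst)
    exact (hφ.continuousOn.integrableOn_compact (isCompact_Icc.prod isCompact_Icc)).mono_set
      (prod_mono Ioc_subset_Icc_self Ioc_subset_Icc_self)
  have hleft : ∀ s ∈ Ioc (0:ℝ) t, ∫ r in (0:ℝ)..s, φ s r = ∫ r, Ψ (s, r) ∂μ := by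
    intro s hs
    have hsection : (fun r => Ψ (s, r)) = (Iic s).indicator (φ s) := by
      ext r
      simp [Ψ, indicator_apply]
    rw [hsection, MeasureTheory.integral_indicator measurableSet_Iic,
      Measure.restrict_restrict measurableSet_Iic, Iic_inter_Ioc_of_le hs.2,
      integral_of_le hs.1.le]
  have hright : ∀ r ∈ Ioc (0:ℝ) t, ∫ s in r..t, φ s r = ∫ s, Ψ (s, r) ∂μ := by
    intro r hr
    have hsection : (fun s => Ψ (s, r)) = (Ici r).indicator (φ · r) := by
      ext s
      simp [Ψ, indicator_apply]
    have hset : Ici r ∩ Ioc 0 t = Icc r t :=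
      ext fun x => ⟨fun h => ⟨h.1, h.2.2⟩, fun h => ⟨h.1, hr.1.trans_le h.1, h.2⟩⟩
    rw [hsection, MeasureTheory.integral_indicator measurableSet_Ici,
      Measure.restrict_restrict measurableSet_Ici, hset, integral_of_le hr.2,
      integral_Icc_eq_integral_Ioc]
  rw [integral_of_le ht, integral_of_le ht, setIntegral_congr_fun measurableSet_Ioc hleft,
    setIntegral_congr_fun measurableSet_Ioc hright]
  exact integral_integral_swap hΨ

noncomputable def laplaceConv (f g : ℝ → ℝ) (x : ℝ) : ℝ :=
  ∫ s in (0:ℝ)..x, f (x - s) * g s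

section LaplaceConv

variable {f g h : ℝ → ℝ} {T x : ℝ}

theorem sub_mem_Icc_zero_of_mem_Icc {s : ℝ} (hx : x ≤ T) (hs : s ∈ Icc 0 x) :
    x - s ∈ Icc 0 T :=
  ⟨sub_nonneg.2 hs.2, (sub_le_self x hs.1).trans hx⟩

theorem laplaceConv_eq_integral_mul_sub (f g : ℝ → ℝ) (x : ℝ) :
    laplaceConv f g x = ∫ s in (0:ℝ)..x, f s * g (x - s) := by
  simpa [laplaceConv] using integral_comp_sub_left (fun s => f s * g (x - s)) x (a := 0) (b := x)

theorem laplaceConv_comm (f g : ℝ → ℝ) : laplaceConv f g = laplaceConv g f := by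
  ext x
  rw [laplaceConv_eq_integral_mul_sub]
  simp only [laplaceConv, mul_comm]

theorem laplaceConv_const_mul_right (f g : ℝ → ℝ) (c x : ℝ) :
    laplaceConv f (fun s => c * g s) x = c * laplaceConv f g x := by
  simp only [laplaceConv, mul_left_comm _ c, intervalIntegral.integral_const_mul]

theorem Set.EqOn.laplaceConv {f' g' : ℝ → ℝ} (hf : EqOn f f' (Icc 0 T))
    (hg : EqOn g g' (Icc 0 T)) : EqOn (laplaceConv f g) (laplaceConv f' g') (Icc 0 T) := by
  intro x hx
  refine integral_congr fun s hs => ?_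
  rw [uIcc_of_le hx.1] at hs
  simp only [hf (sub_mem_Icc_zero_of_mem_Icc hx.2 hs), hg ⟨hs.1, hs.2.trans hx.2⟩]

theorem continuousOn_laplaceConv_integrand (hf : ContinuousOn f (Icc 0 T))
    (hg : ContinuousOn g (Icc 0 T)) (hx : x ∈ Icc 0 T) :
    ContinuousOn (fun s => f (x - s) * g s) (uIcc 0 x) := by
  rw [uIcc_of_le hx.1]
  exact (hf.comp (continuousOn_const.sub continuousOn_id)
    fun s hs => sub_mem_Icc_zero_of_mem_Icc hx.2 hs).mul (hg.mono (Icc_subset_Icc_right hx.2))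

theorem laplaceConv_add_right (hf : ContinuousOn f (Icc 0 T)) (hg : ContinuousOn g (Icc 0 T))
    (hh : ContinuousOn h (Icc 0 T)) (hx : x ∈ Icc 0 T) :
    laplaceConv f (fun s => g s + h s) x = laplaceConv f g x + laplaceConv f h x := by
  simp only [laplaceConv, mul_add]
  exact integral_add (continuousOn_laplaceConv_integrand hf hg hx).intervalIntegrable
    (continuousOn_laplaceConv_integrand hf hh hx).intervalIntegrable

theorem Continuous.laplaceConv (hf : Continuous f) (hg : Continuous g) :
    Continuous (laplaceConv f g) :=
  continuous_parametric_intervalIntegral_of_continuous (a₀ := 0)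
    ((hf.comp (continuous_fst.sub continuous_snd)).mul (hg.comp continuous_snd)) continuous_id

theorem ContinuousOn.laplaceConv (hf : ContinuousOn f (Icc 0 T))
    (hg : ContinuousOn g (Icc 0 T)) : ContinuousOn (laplaceConv f g) (Icc 0 T) := by
  obtain ⟨F, hF, hFf⟩ := hf.exists_continuous_eqOn_Icc
  obtain ⟨G, hG, hGg⟩ := hg.exists_continuous_eqOn_Icc
  exact (hF.laplaceConv hG).continuousOn.congr (hFf.symm.laplaceConv hGg.symm)

theorem laplaceConv_assoc_of_continuous (hf : Continuous f) (hg : Continuous g)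
    (hh : Continuous h) (hx : 0 ≤ x) :
    laplaceConv (laplaceConv f g) h x = laplaceConv f (laplaceConv g h) x := by
  have hφ : Continuous (uncurry fun s r => f (x - s) * (g (s - r) * h r)) :=
    (hf.comp (continuous_const.sub continuous_fst)).mul
      ((hg.comp (continuous_fst.sub continuous_snd)).mul (hh.comp continuous_snd))
  symm
  calc laplaceConv f (laplaceConv g h) x
      = ∫ s in (0:ℝ)..x, ∫ r in (0:ℝ)..s, f (x - s) * (g (s - r) * h r) := by
        simp only [laplaceConv, intervalIntegral.integral_const_mul]
    _ = ∫ r in (0:ℝ)..x, ∫ s in r..x, f (x - s) * (g (s - r) * h r) :=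
        integral_integral_triangle_swap hx hφ
    _ = laplaceConv (laplaceConv f g) h x := by
        refine integral_congr fun r _ => ?_
        have hshift := integral_comp_add_right (fun s => f (x - s) * (g (s - r) * h r)) r
          (a := 0) (b := x - r)
        simp only [zero_add, sub_add_cancel, add_sub_cancel_right] at hshift
        simp only [laplaceConv, ← intervalIntegral.integral_mul_const, ← hshift]
        refine integral_congr fun u _ => ?_
        rw [sub_add_eq_sub_sub_swap]
        ring

theorem laplaceConv_assoc (hf : ContinuousOn f (Icc 0 T)) (hg : ContinuousOn g (Icc 0 T))
    (hh : ContinuousOn h (Icc 0 T)) (hx : x ∈ Icc 0 T) :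
    laplaceConv (laplaceConv f g) h x = laplaceConv f (laplaceConv g h) x := by
  obtain ⟨F, hF, hFf⟩ := hf.exists_continuous_eqOn_Icc
  obtain ⟨G, hG, hGg⟩ := hg.exists_continuous_eqOn_Icc
  obtain ⟨H, hH, hHh⟩ := hh.exists_continuous_eqOn_Icc
  calc laplaceConv (laplaceConv f g) h x = laplaceConv (laplaceConv F G) H x :=
        (hFf.symm.laplaceConv hGg.symm).laplaceConv hHh.symm hx
    _ = laplaceConv F (laplaceConv G H) x := laplaceConv_assoc_of_continuous hF hG hH hx.1
    _ = laplaceConv f (laplaceConv g h) x := hFf.laplaceConv (hGg.laplaceConv hHh) hx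

theorem laplaceConv_add_laplaceConv_right (hf : ContinuousOn f (Icc 0 T))
    (hg : ContinuousOn g (Icc 0 T)) (hh : ContinuousOn h (Icc 0 T)) (hx : x ∈ Icc 0 T) :
    laplaceConv f (fun s => h s + laplaceConv g h s) x
      = laplaceConv f h x + laplaceConv (laplaceConv f g) h x := by
  rw [laplaceConv_add_right hf hh (hg.laplaceConv hh) hx, laplaceConv_assoc hf hg hh hx]

theorem hasSum_laplaceConv {ι : Type*} [Countable ι] {F : ι → ℝ → ℝ} {S : ℝ → ℝ} {d : ι → ℝ}
    (hf : ContinuousOn f (Icc 0 T)) (hF : ∀ n, ContinuousOn (F n) (Icc 0 T)) (hd : Summable d)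
    (hFd : ∀ n, ∀ y ∈ Icc 0 T, |F n y| ≤ d n) (hS : ∀ y ∈ Icc 0 T, HasSum (fun n => F n y) (S y))
    (hx : x ∈ Icc 0 T) : HasSum (fun n => laplaceConv f (F n) x) (laplaceConv f S x) := by
  obtain ⟨M, hM⟩ := isCompact_Icc.exists_bound_of_continuousOn hf
  have hsub : Ι 0 x ⊆ Icc 0 x := by
    rw [uIoc_of_le hx.1]
    exact Ioc_subset_Icc_self
  have hsubT : Icc 0 x ⊆ Icc 0 T := Icc_subset_Icc_right hx.2
  refine hasSum_integral_of_dominated_convergence (fun n _ => M * d n)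
    (fun n => ((continuousOn_laplaceConv_integrand hf (hF n) hx).mono
      uIoc_subset_uIcc).aestronglyMeasurable measurableSet_uIoc)
    (fun n => ae_of_all _ fun s hs => ?_) (ae_of_all _ fun _ _ => hd.mul_left M)
    intervalIntegrable_const
    (ae_of_all _ fun s hs => (hS s (hsubT (hsub hs))).mul_left (f (x - s)))
  rw [norm_mul]
  exact mul_le_mul (hM _ (sub_mem_Icc_zero_of_mem_Icc hx.2 (hsub hs)))
    (hFd n s (hsubT (hsub hs))) (norm_nonneg _) ((norm_nonneg _).trans (hM x hx))

end LaplaceConv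

theorem stmt_7_general (L T C : ℝ)
    (g β : ℝ → ℝ) (hg : ContinuousOn g (Set.Icc 0 T)) (hβ : ContinuousOn β (Set.Icc 0 T))
    (z : ℕ → ℝ → ℝ) (hz : ∀ n ≥ 1, ContinuousOn (z n) (Set.Icc 0 T))
    (hzC : ∀ n ≥ 1, ∀ t ∈ Set.Icc (0:ℝ) T, |z n t| ≤ C)
    (γ₀ : ℝ)
    (lam : ℕ → ℝ) (hlam : ∀ n : ℕ, lam n = (n : ℝ) * Real.pi / L)
    (α : ℕ → ℝ) (hα : ∀ n : ℕ, α n = if Odd n then 2 * γ₀ else 0)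
    (θ : ℕ → ℝ → ℝ)
    (hθ : ∀ n ≥ 1, ∀ t : ℝ,
      θ n t = (γ₀ / lam n) * (∫ s in (0:ℝ)..t, g s)
        - (γ₀ / lam n) *
            ∫ s in (0:ℝ)..t, g (t - s) * (z n s + ∫ r in (0:ℝ)..s, β (s - r) * z n r))
    (H : ℝ → ℝ)
    (hH : ∀ t : ℝ, H t = ∑' n : ℕ, (α (n + 1) / (lam (n + 1)) ^ 2) * z (n + 1) t) :
    ∀ t ∈ Set.Icc (0:ℝ) T,
      HasSum (fun n : ℕ => (α (n + 1) / lam (n + 1)) * θ (n + 1) t)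
        (γ₀ * ((∫ s in (0:ℝ)..t, g s) * (∑' n : ℕ, α (n + 1) / (lam (n + 1)) ^ 2)
          - (∫ s in (0:ℝ)..t, g (t - s) * H s)
          - ∫ s in (0:ℝ)..t, β s * ∫ r in (0:ℝ)..(t - s), g (t - s - r) * H r)) := by
  intro t ht
  set c : ℕ → ℝ := fun n => α (n + 1) / lam (n + 1) ^ 2
  have hc : Summable c := by
    simp only [c, hlam]
    refine summable_div_sq_nat_mul_pi_div L (M := 2 * |γ₀|) fun n => ?_
    rw [hα]
    split_ifs <;> simp [abs_mul]
  have hcz : ∀ n, ContinuousOn (fun x => c n * z (n + 1) x) (Icc 0 T) :=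
    fun n => continuousOn_const.mul (hz _ (by omega))
  have hcz_le : ∀ n, ∀ x ∈ Icc 0 T, |c n * z (n + 1) x| ≤ |c n| * C := fun n x hx => by
    rw [abs_mul]
    exact mul_le_mul_of_nonneg_left (hzC _ (by omega) x hx) (abs_nonneg _)
  have hcC : Summable fun n => |c n| * C := hc.abs.mul_right C
  have hHsum : ∀ x ∈ Icc 0 T, HasSum (fun n => c n * z (n + 1) x) (H x) := fun x hx => by
    rw [hH]
    exact (hcC.of_norm_bounded fun n => hcz_le n x hx).hasSum
  have hHcont : ContinuousOn H (Icc 0 T) :=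
    (continuousOn_tsum hcz hcC hcz_le).congr fun x _ => hH x
  have hterm : ∀ n, α (n + 1) / lam (n + 1) * θ (n + 1) t
      = γ₀ * (c n * ∫ s in (0:ℝ)..t, g s) - γ₀ * (laplaceConv g (fun x => c n * z (n + 1) x) t
        + laplaceConv (laplaceConv g β) (fun x => c n * z (n + 1) x) t) := by
    intro n
    rw [hθ _ (by omega), laplaceConv_const_mul_right, laplaceConv_const_mul_right, ← mul_add,
      ← laplaceConv_add_laplaceConv_right hg hβ (hz _ (by omega)) ht]
    simp only [c, laplaceConv]
    ring
  have hlast : laplaceConv (laplaceConv g β) H t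
      = ∫ s in (0:ℝ)..t, β s * ∫ r in (0:ℝ)..(t - s), g (t - s - r) * H r := by
    rw [laplaceConv_comm g β, laplaceConv_assoc hβ hg hHcont ht, laplaceConv_eq_integral_mul_sub]
    rfl
  have hsum := ((hc.hasSum.mul_right (∫ s in (0:ℝ)..t, g s)).mul_left γ₀).sub
    (((hasSum_laplaceConv hg hcz hcC hcz_le hHsum ht).add
      (hasSum_laplaceConv (hg.laplaceConv hβ) hcz hcC hcz_le hHsum ht)).mul_left γ₀)
  simp only [hterm, ← hlast]
  refine (congrArg (HasSum _) ?_).mp hsum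
  simp only [laplaceConv]
  ring

theorem stmt_7 (L T C : ℝ) (hL : 0 < L) (hT : 0 < T)
    (g β : ℝ → ℝ) (hg : ContinuousOn g (Set.Icc 0 T)) (hβ : ContinuousOn β (Set.Icc 0 T))
    (z : ℕ → ℝ → ℝ) (hz : ∀ n ≥ 1, ContinuousOn (z n) (Set.Icc 0 T))
    (hzC : ∀ n ≥ 1, ∀ t ∈ Set.Icc (0:ℝ) T, |z n t| ≤ C)
    (γ₀ : ℝ) (hγ₀ : γ₀ = Real.sqrt (2 / L))
    (lam : ℕ → ℝ) (hlam : ∀ n : ℕ, lam n = (n : ℝ) * Real.pi / L)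
    (α : ℕ → ℝ) (hα : ∀ n : ℕ, α n = if Odd n then 2 * γ₀ else 0)
    (θ : ℕ → ℝ → ℝ)
    (hθ : ∀ n ≥ 1, ∀ t : ℝ,
      θ n t = (γ₀ / lam n) * (∫ s in (0:ℝ)..t, g s)
        - (γ₀ / lam n) *
            ∫ s in (0:ℝ)..t, g (t - s) * (z n s + ∫ r in (0:ℝ)..s, β (s - r) * z n r))
    (H : ℝ → ℝ)
    (hH : ∀ t : ℝ, H t = ∑' n : ℕ, (α (n + 1) / (lam (n + 1)) ^ 2) * z (n + 1) t) :
    ∀ t ∈ Set.Icc (0:ℝ) T,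
      HasSum (fun n : ℕ => (α (n + 1) / lam (n + 1)) * θ (n + 1) t)
        (γ₀ * ((∫ s in (0:ℝ)..t, g s) * (∑' n : ℕ, α (n + 1) / (lam (n + 1)) ^ 2)
          - (∫ s in (0:ℝ)..t, g (t - s) * H s)
          - ∫ s in (0:ℝ)..t, β s * ∫ r in (0:ℝ)..(t - s), g (t - s - r) * H r)) :=
  stmt_7_general L T C g β hg hβ z hz hzC γ₀ lam hlam α hα θ hθ H hH
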